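/- Assume 0 < μ < 1/L_f and 0 < β < 2. Consider the inexact gradient descent iterates: given x⁰, z⁰ ∈ ℝⁿ, for each k ≥ 0 let x^{k+1} be the unique minimizer of x ↦ ⟨∇f(x^k), x⟩ + h(x) + ‖x − z^k‖²/(2μ), let x_{μg}(z^k) be the proximal point of g at z^k, and set z^{k+1} = z^k + β(x^{k+1} − x_{μg}(z^k)). Define the potential ℱ(x, z) = f(x) + h(x) + ‖x − z‖²/(2μ) − M_{μg}(z), and the constants c₁ = (μ^{-1} − L_f)/2 > 0 and c₂ = (1/β − 1/2)/μ > 0. Then for all k ≥ 0: ℱ(x^k, z^k) ≥ F_μ(z^k) ≥ F*, and ℱ(x^k, z^k) − ℱ(x^{k+1}, z^{k+1}) ≥ c₁‖x^{k+1} − x^k‖² + c₂‖z^{k+1} − z^k‖². -/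

import Mathlib

open scoped RealInnerProductSpace

noncomputable section

/-- `ℝⁿ` with the Euclidean norm. -/
abbrev En (n : ℕ) := EuclideanSpace ℝ (Fin n)

/-- `h` is proper: finite somewhere and never `⊥`. -/
def ProperE {n : ℕ} (h : En n → EReal) : Prop :=
  (∃ x, h x ≠ ⊤) ∧ ∀ x, h x ≠ ⊥

/-- Convexity of an extended-real-valued function. -/
def ConvexE {n : ℕ} (h : En n → EReal) : Prop :=
  ∀ x y : En n, ∀ a b : ℝ, 0 ≤ a → 0 ≤ b → a + b = 1 →
    h (a • x + b • y) ≤ (a : EReal) * h x + (b : EReal) * h y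

/-- `Mφ` is the Moreau envelope of `φ` with parameter `μ` and `xφ` the associated
(unique) proximal mapping. -/
def IsMoreau {n : ℕ} (φ : En n → EReal) (μ : ℝ) (Mφ : En n → ℝ) (xφ : En n → En n) : Prop :=
  ∀ z : En n,
    (Mφ z : EReal) = φ (xφ z) + ((‖xφ z - z‖ ^ 2 / (2 * μ) : ℝ) : EReal) ∧
    (∀ x, (Mφ z : EReal) ≤ φ x + ((‖x - z‖ ^ 2 / (2 * μ) : ℝ) : EReal)) ∧
    (∀ x, φ x + ((‖x - z‖ ^ 2 / (2 * μ) : ℝ) : EReal) = (Mφ z : EReal) → x = xφ z)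

/-- Real-valued version, for the convex function `g`. -/
def IsMoreauR {n : ℕ} (g : En n → ℝ) (μ : ℝ) (Mg : En n → ℝ) (xg : En n → En n) : Prop :=
  ∀ z : En n,
    Mg z = g (xg z) + ‖xg z - z‖ ^ 2 / (2 * μ) ∧
    (∀ x, Mg z ≤ g x + ‖x - z‖ ^ 2 / (2 * μ)) ∧
    (∀ x, g x + ‖x - z‖ ^ 2 / (2 * μ) = Mg z → x = xg z)

/-- `ξ ∈ ∂g(x)` for a (finite-valued) convex function `g`. -/
def ConvexSubgradAt {n : ℕ} (g : En n → ℝ) (ξ x : En n) : Prop :=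
  ∀ y, g x + ⟪ξ, y - x⟫ ≤ g y

/-- `ξ ∈ ∂h(x)` for a proper convex extended-real-valued `h`. -/
def ESubgradAt {n : ℕ} (h : En n → EReal) (ξ x : En n) : Prop :=
  ∀ y, h x + ((⟪ξ, y - x⟫ : ℝ) : EReal) ≤ h y

/-- The potential function `ℱ(x,z) = f(x) + h(x) + ‖x−z‖²/(2μ) − M_{μg}(z)`. -/
def potF {n : ℕ} (f : En n → ℝ) (h : En n → EReal) (Mg : En n → ℝ) (μ : ℝ)
    (x z : En n) : EReal :=
  h x + ((f x + ‖x - z‖ ^ 2 / (2 * μ) - Mg z : ℝ) : EReal)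

/-! The `x`-update is a proximal-gradient step on `f + h`: the three-point inequality for its
strongly convex subproblem, combined with the descent lemma for `f`, decreases
`f + h + ‖· - z‖² / (2μ)` by `(μ⁻¹ - L_f) / 2 * ‖x⁺ - x‖²`. For the `z`-update, the Moreau envelope
`M_{μg}` of a convex `g` is convex with subgradient `(z - x_{μg}(z)) / μ`; since
`z⁺ - z = β (x⁺ - x_{μg}(z))`, the resulting quadratic terms cancel exactly against
`(1/β - 1/2) / μ * ‖z⁺ - z‖²`. The bounds `ℱ ≥ F_μ ≥ F*` are read off from the minimality
properties of the two envelopes. -/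

open Set Filter Topology

section InnerProductSpace

variable {E : Type*} [NormedAddCommGroup E] [InnerProductSpace ℝ E]

theorem le_add_inner_add_sq_of_lipschitz_gradient [CompleteSpace E] {f : E → ℝ} {f' : E → E}
    {L : ℝ} (hf : ∀ x, HasGradientAt f (f' x) x) (hL : ∀ x y, ‖f' x - f' y‖ ≤ L * ‖x - y‖)
    (x y : E) : f y ≤ f x + ⟪f' x, y - x⟫ + L / 2 * ‖y - x‖ ^ 2 := by
  set d := y - x
  let G : ℝ → ℝ := fun t => f (x + t • d) - t * ⟪f' x, d⟫ - L / 2 * t ^ 2 * ‖d‖ ^ 2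
  have hG : ∀ t, HasDerivAt G (⟪f' (x + t • d) - f' x, d⟫ - L * t * ‖d‖ ^ 2) t := by
    intro t
    have hline : HasDerivAt (fun t : ℝ => x + t • d) d t := by
      simpa using ((hasDerivAt_id t).smul_const d).const_add x
    have hf_line : HasDerivAt (fun t : ℝ => f (x + t • d)) ⟪f' (x + t • d), d⟫ t := by
      have := (hf _).hasFDerivAt.comp_hasDerivAt t hline
      simp only [InnerProductSpace.toDual_apply_apply] at this
      exact this
    refine ((hf_line.sub ((hasDerivAt_id t).mul_const ⟪f' x, d⟫)).sub
      (((hasDerivAt_pow 2 t).const_mul (L / 2)).mul_const (‖d‖ ^ 2))).congr_deriv ?_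
    simp only [inner_sub_left]
    ring
  have hG_nonpos : ∀ t ∈ interior (Ici (0 : ℝ)),
      ⟪f' (x + t • d) - f' x, d⟫ - L * t * ‖d‖ ^ 2 ≤ 0 := by
    intro t ht
    rw [interior_Ici, mem_Ioi] at ht
    have := calc ⟪f' (x + t • d) - f' x, d⟫
        _ ≤ ‖f' (x + t • d) - f' x‖ * ‖d‖ := real_inner_le_norm _ _
        _ ≤ L * ‖t • d‖ * ‖d‖ := by
          gcongr
          simpa using hL (x + t • d) x
        _ = L * t * ‖d‖ ^ 2 := by rw [norm_smul, Real.norm_of_nonneg ht.le]; ring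
    linarith
  have hG_anti : AntitoneOn G (Ici 0) :=
    antitoneOn_of_hasDerivWithinAt_nonpos (convex_Ici 0)
      (fun t _ => (hG t).continuousAt.continuousWithinAt)
      (fun t _ => (hG t).hasDerivWithinAt) hG_nonpos
  have := hG_anti (mem_Ici.2 le_rfl) (mem_Ici.2 zero_le_one) zero_le_one
  simp only [G, d, one_smul, zero_smul, add_zero, add_sub_cancel] at this
  linarith

theorem ConvexOn.add_sq_le_of_isMinOn {s : Set E} {ψ : E → ℝ} (hψ : ConvexOn ℝ s ψ) {μ : ℝ}
    {z u w : E} (hu : u ∈ s) (hw : w ∈ s)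
    (hmin : IsMinOn (fun v => ψ v + ‖v - z‖ ^ 2 / (2 * μ)) s u) :
    ψ u + ‖u - z‖ ^ 2 / (2 * μ) + ‖w - u‖ ^ 2 / (2 * μ) ≤ ψ w + ‖w - z‖ ^ 2 / (2 * μ) := by
  set I := ⟪u - z, w - u⟫
  set N := ‖w - u‖ ^ 2
  have hexpand : ∀ t : ℝ, ‖(1 - t) • u + t • w - z‖ ^ 2 = ‖u - z‖ ^ 2 + 2 * t * I + t ^ 2 * N := by
    intro t
    rw [show (1 - t) • u + t • w - z = (u - z) + t • (w - u) by
      rw [sub_smul, one_smul, smul_sub]; abel, norm_add_sq_real, real_inner_smul_right,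
      norm_smul, mul_pow, Real.norm_eq_abs, sq_abs]
    ring
  have hsmall : ∀ t ∈ Ioo (0 : ℝ) 1, ψ u ≤ ψ w + I / μ + t * (N / (2 * μ)) := by
    rintro t ⟨ht0, ht1⟩
    have hconv := hψ.2 hu hw (by linarith : 0 ≤ 1 - t) ht0.le (by ring)
    have hle := isMinOn_iff.1 hmin _ (hψ.1 hu hw (by linarith : 0 ≤ 1 - t) ht0.le (by ring))
    rw [hexpand] at hle
    rw [smul_eq_mul, smul_eq_mul] at hconv
    have : t * ψ u ≤ t * (ψ w + I / μ + t * (N / (2 * μ))) := by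
      have e : (‖u - z‖ ^ 2 + 2 * t * I + t ^ 2 * N) / (2 * μ)
          = ‖u - z‖ ^ 2 / (2 * μ) + t * (I / μ) + t * (t * (N / (2 * μ))) := by ring
      rw [e] at hle
      linarith
    exact le_of_mul_le_mul_left this ht0
  have hlim : Tendsto (fun t : ℝ => ψ w + I / μ + t * (N / (2 * μ))) (𝓝[>] 0)
      (𝓝 (ψ w + I / μ)) := by
    have hcont : Continuous fun t : ℝ => ψ w + I / μ + t * (N / (2 * μ)) := by fun_prop
    exact (hcont.tendsto' 0 _ (by simp)).mono_left nhdsWithin_le_nhds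
  have hfirst : ψ u ≤ ψ w + I / μ :=
    ge_of_tendsto hlim (eventually_of_mem (Ioo_mem_nhdsGT one_pos) hsmall)
  have hw_sq : ‖w - z‖ ^ 2 = ‖u - z‖ ^ 2 + 2 * I + N := by
    rw [show w - z = (u - z) + (w - u) by abel, norm_add_sq_real]
  rw [hw_sq]
  have e : (‖u - z‖ ^ 2 + 2 * I + N) / (2 * μ)
      = ‖u - z‖ ^ 2 / (2 * μ) + I / μ + N / (2 * μ) := by ring
  linarith

end InnerProductSpace

section MoreauEnvelope

variable {n : ℕ}

theorem ConvexE.convexOn_toReal {h : En n → EReal} (hconv : ConvexE h) (hbot : ∀ x, h x ≠ ⊥) :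
    ConvexOn ℝ {x | h x ≠ ⊤} fun x => (h x).toReal := by
  have hcomb : ∀ x ∈ {x | h x ≠ ⊤}, ∀ y ∈ {x | h x ≠ ⊤}, ∀ a b : ℝ, 0 ≤ a → 0 ≤ b →
      a + b = 1 → h (a • x + b • y) ≤ ((a * (h x).toReal + b * (h y).toReal : ℝ) : EReal) := by
    intro x hx y hy a b ha hb hab
    have := hconv x y a b ha hb hab
    lift h x to ℝ using ⟨hx, hbot x⟩ with r
    lift h y to ℝ using ⟨hy, hbot y⟩ with r'
    simpa using this
  refine ⟨fun x hx y hy a b ha hb hab => ?_, fun x hx y hy a b ha hb hab => ?_⟩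
  · exact ne_top_of_le_ne_top (EReal.coe_ne_top _) (hcomb x hx y hy a b ha hb hab)
  · simpa only [EReal.toReal_coe, smul_eq_mul] using
      EReal.toReal_le_toReal (hcomb x hx y hy a b ha hb hab) (hbot _) (EReal.coe_ne_top _)

variable {g : En n → ℝ} {μ : ℝ} {Mg : En n → ℝ} {xg : En n → En n}

theorem IsMoreauR.isMinOn (hM : IsMoreauR g μ Mg xg) (z : En n) :
    IsMinOn (fun v => g v + ‖v - z‖ ^ 2 / (2 * μ)) univ (xg z) :=
  isMinOn_univ_iff.2 fun v => (hM z).1 ▸ (hM z).2.1 v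

theorem IsMoreauR.convexSubgradAt (hg : ConvexOn ℝ univ g) (hμ : 0 < μ)
    (hM : IsMoreauR g μ Mg xg) (z : En n) : ConvexSubgradAt Mg (μ⁻¹ • (z - xg z)) z := by
  intro z'
  set p := xg z
  set p' := xg z'
  have hthree := hg.add_sq_le_of_isMinOn (mem_univ p) (mem_univ p') (hM.isMinOn z)
  rw [← (hM z).1] at hthree
  have hsq : ‖(p' - p) - (z' - z)‖ ^ 2
      = ‖p' - z'‖ ^ 2 - ‖p' - z‖ ^ 2 + ‖p' - p‖ ^ 2 - 2 * ⟪z - p, z' - z⟫ := by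
    simp only [← real_inner_self_eq_norm_sq, inner_sub_left, inner_sub_right, real_inner_comm]
    ring
  have hgap : 0 ≤ ‖(p' - p) - (z' - z)‖ ^ 2 / (2 * μ) := by positivity
  rw [real_inner_smul_left, (hM z').1]
  rw [hsq] at hgap
  have e : (‖p' - z'‖ ^ 2 - ‖p' - z‖ ^ 2 + ‖p' - p‖ ^ 2 - 2 * ⟪z - p, z' - z⟫) / (2 * μ)
      = ‖p' - z'‖ ^ 2 / (2 * μ) - ‖p' - z‖ ^ 2 / (2 * μ) + ‖p' - p‖ ^ 2 / (2 * μ)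
        - μ⁻¹ * ⟪z - p, z' - z⟫ := by ring
  linarith

theorem IsMoreauR.relaxed_step_le (hg : ConvexOn ℝ univ g) (hμ : 0 < μ)
    (hM : IsMoreauR g μ Mg xg) {β : ℝ} {x z z' : En n} (hz' : z' = z + β • (x - xg z)) :
    ‖x - z'‖ ^ 2 / (2 * μ) - Mg z' + (1 / β - 1 / 2) / μ * ‖z' - z‖ ^ 2
      ≤ ‖x - z‖ ^ 2 / (2 * μ) - Mg z := by
  have hsub := hM.convexSubgradAt hg hμ z z'
  set d := x - xg z
  have hstep : z' - z = β • d := by rw [hz', add_sub_cancel_left]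
  have hx_sq : ‖x - z'‖ ^ 2 = ‖x - z‖ ^ 2 - 2 * β * ⟪x - z, d⟫ + β ^ 2 * ‖d‖ ^ 2 := by
    rw [show x - z' = (x - z) - β • d by rw [← hstep]; abel, norm_sub_sq_real,
      real_inner_smul_right, norm_smul, mul_pow, Real.norm_eq_abs, sq_abs]
    ring
  have hsplit : ⟪x - z, d⟫ + ⟪z - xg z, d⟫ = ‖d‖ ^ 2 := by
    rw [← inner_add_left, sub_add_sub_cancel, real_inner_self_eq_norm_sq]
  rw [hstep, real_inner_smul_left, real_inner_smul_right] at hsub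
  rw [hx_sq, hstep, norm_smul, mul_pow, Real.norm_eq_abs, sq_abs]
  linear_combination hsub - (β / μ) * hsplit + (‖d‖ ^ 2 / μ) * inv_mul_mul_self β

end MoreauEnvelope

section Potential

variable {n : ℕ} {f : En n → ℝ} {h : En n → EReal} {g : En n → ℝ} {μ : ℝ}
  {Mφ : En n → ℝ} {xφ : En n → En n} {Mg : En n → ℝ} {xg : En n → En n}

theorem le_moreau_sub_moreau {Fstar : ℝ}
    (hF : ∀ x, (Fstar : EReal) ≤ ((f x : ℝ) : EReal) + h x - ((g x : ℝ) : EReal))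
    (hφ : IsMoreau (fun w => ((f w : ℝ) : EReal) + h w) μ Mφ xφ) (hM : IsMoreauR g μ Mg xg)
    (z : En n) : (Fstar : EReal) ≤ ((Mφ z - Mg z : ℝ) : EReal) := by
  set p := xφ z
  have hMφ : ((Mφ z : ℝ) : EReal) = ((f p : ℝ) : EReal) + h p
      + ((‖p - z‖ ^ 2 / (2 * μ) : ℝ) : EReal) := (hφ z).1
  have hF_p := hF p
  have hp_top : h p ≠ ⊤ := fun htop => by simp [htop] at hMφ
  have hp_bot : h p ≠ ⊥ := fun hbot => by simp [hbot] at hMφ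
  lift h p to ℝ using ⟨hp_top, hp_bot⟩ with r
  norm_cast at hMφ hF_p
  have hMg := (hM z).2.1 p
  exact EReal.coe_le_coe_iff.2 (by linarith)

theorem moreau_sub_le_potF (hφ : IsMoreau (fun w => ((f w : ℝ) : EReal) + h w) μ Mφ xφ)
    (x z : En n) : ((Mφ z - Mg z : ℝ) : EReal) ≤ potF f h Mg μ x z := by
  have hMφ : ((Mφ z : ℝ) : EReal) ≤ ((f x : ℝ) : EReal) + h x
      + ((‖x - z‖ ^ 2 / (2 * μ) : ℝ) : EReal) := (hφ z).2.1 x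
  unfold potF
  revert hMφ
  induction h x using EReal.rec with
  | bot => simp
  | top => rw [EReal.top_add_coe]; exact fun _ => le_top
  | coe r =>
    intro hMφ
    norm_cast at hMφ ⊢
    linarith

theorem prox_grad_step_le {f' : En n → En n} {L : ℝ} (hf : ∀ x, HasGradientAt f (f' x) x)
    (hL : ∀ x y, ‖f' x - f' y‖ ≤ L * ‖x - y‖) (hconv : ConvexE h) (hbot : ∀ x, h x ≠ ⊥)
    {x z x' : En n}
    (hx' : ∀ w, ((⟪f' x, x'⟫ + ‖x' - z‖ ^ 2 / (2 * μ) : ℝ) : EReal) + h x' ≤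
      ((⟪f' x, w⟫ + ‖w - z‖ ^ 2 / (2 * μ) : ℝ) : EReal) + h w) :
    h x' + ((f x' + ‖x' - z‖ ^ 2 / (2 * μ) + (μ⁻¹ - L) / 2 * ‖x' - x‖ ^ 2 : ℝ) : EReal) ≤
      h x + ((f x + ‖x - z‖ ^ 2 / (2 * μ) : ℝ) : EReal) := by
  rcases eq_or_ne (h x) ⊤ with hx_top | hx_top
  · simp [hx_top]
  have hx'_top : h x' ≠ ⊤ := by
    intro htop
    have := hx' x
    lift h x to ℝ using ⟨hx_top, hbot x⟩ with r
    simp [htop] at this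
    exact EReal.coe_ne_top _ this
  have hmin : IsMinOn (fun v => (h v).toReal + ⟪f' x, v⟫ + ‖v - z‖ ^ 2 / (2 * μ))
      {v | h v ≠ ⊤} x' := by
    refine isMinOn_iff.2 fun v hv => ?_
    have := hx' v
    lift h v to ℝ using ⟨hv, hbot v⟩ with r
    lift h x' to ℝ using ⟨hx'_top, hbot x'⟩ with s
    norm_cast at this
    simp only [EReal.toReal_coe]
    linarith
  have hψ : ConvexOn ℝ {v | h v ≠ ⊤} fun v => (h v).toReal + ⟪f' x, v⟫ :=
    (hconv.convexOn_toReal hbot).add ((innerₛₗ ℝ (f' x)).convexOn (hconv.convexOn_toReal hbot).1)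
  have hthree := hψ.add_sq_le_of_isMinOn hx'_top hx_top hmin
  have hdesc := le_add_inner_add_sq_of_lipschitz_gradient hf hL x x'
  lift h x to ℝ using ⟨hx_top, hbot x⟩ with r
  lift h x' to ℝ using ⟨hx'_top, hbot x'⟩ with s
  simp only [EReal.toReal_coe, norm_sub_rev x x'] at hthree
  norm_cast
  have e : (μ⁻¹ - L) / 2 * ‖x' - x‖ ^ 2 = ‖x' - x‖ ^ 2 / (2 * μ) - L / 2 * ‖x' - x‖ ^ 2 := by
    ring
  linarith [inner_sub_right (𝕜 := ℝ) (f' x) x' x]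

theorem potF_add_le_of_step {f' : En n → En n} {L : ℝ} (hf : ∀ x, HasGradientAt f (f' x) x)
    (hL : ∀ x y, ‖f' x - f' y‖ ≤ L * ‖x - y‖) (hconv : ConvexE h) (hbot : ∀ x, h x ≠ ⊥)
    (hg : ConvexOn ℝ univ g) (hμ : 0 < μ) (hM : IsMoreauR g μ Mg xg) {β : ℝ} {x z x' z' : En n}
    (hx' : ∀ w, ((⟪f' x, x'⟫ + ‖x' - z‖ ^ 2 / (2 * μ) : ℝ) : EReal) + h x' ≤
      ((⟪f' x, w⟫ + ‖w - z‖ ^ 2 / (2 * μ) : ℝ) : EReal) + h w)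
    (hz' : z' = z + β • (x' - xg z)) :
    potF f h Mg μ x' z' + (((μ⁻¹ - L) / 2 * ‖x' - x‖ ^ 2 +
      (1 / β - 1 / 2) / μ * ‖z' - z‖ ^ 2 : ℝ) : EReal) ≤ potF f h Mg μ x z := by
  have hx_step := prox_grad_step_le hf hL hconv hbot hx'
  have hz_step := hM.relaxed_step_le hg hμ hz'
  calc potF f h Mg μ x' z' + (((μ⁻¹ - L) / 2 * ‖x' - x‖ ^ 2 +
        (1 / β - 1 / 2) / μ * ‖z' - z‖ ^ 2 : ℝ) : EReal)
      = h x' + ((f x' + ‖x' - z'‖ ^ 2 / (2 * μ) - Mg z' + ((μ⁻¹ - L) / 2 * ‖x' - x‖ ^ 2 +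
          (1 / β - 1 / 2) / μ * ‖z' - z‖ ^ 2) : ℝ) : EReal) := by
        rw [potF, add_assoc, ← EReal.coe_add]
    _ ≤ h x' + ((f x' + ‖x' - z‖ ^ 2 / (2 * μ) + (μ⁻¹ - L) / 2 * ‖x' - x‖ ^ 2
          + -Mg z : ℝ) : EReal) := by
        refine add_le_add le_rfl (EReal.coe_le_coe_iff.2 ?_)
        linarith
    _ = h x' + ((f x' + ‖x' - z‖ ^ 2 / (2 * μ) + (μ⁻¹ - L) / 2 * ‖x' - x‖ ^ 2 : ℝ) : EReal)
          + ((-Mg z : ℝ) : EReal) := by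
        rw [add_assoc (h x'), ← EReal.coe_add]
    _ ≤ h x + ((f x + ‖x - z‖ ^ 2 / (2 * μ) : ℝ) : EReal) + ((-Mg z : ℝ) : EReal) := by
        gcongr
    _ = potF f h Mg μ x z := by
        rw [potF, add_assoc, ← EReal.coe_add, ← sub_eq_add_neg]

end Potential

theorem stmt15_general {n : ℕ} (f : En n → ℝ) (f' : En n → En n) (Lf : ℝ)
    (hfdiff : ∀ x, HasGradientAt f (f' x) x)
    (hfLip : ∀ x y : En n, ‖f' x - f' y‖ ≤ Lf * ‖x - y‖)
    (h : En n → EReal) (hhproper : ProperE h)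
    (hhconv : ConvexE h)
    (g : En n → ℝ) (hg : ConvexOn ℝ Set.univ g)
    (μ β : ℝ) (hμ0 : 0 < μ)
    (Fstar : ℝ)
    (hmin : ∃ xs : En n, ((f xs : ℝ) : EReal) + h xs - ((g xs : ℝ) : EReal) = (Fstar : EReal) ∧
      ∀ x, (Fstar : EReal) ≤ ((f x : ℝ) : EReal) + h x - ((g x : ℝ) : EReal))
    (Mφ : En n → ℝ) (xφ : En n → En n)
    (hφprox : IsMoreau (fun w => ((f w : ℝ) : EReal) + h w) μ Mφ xφ)
    (Mg : En n → ℝ) (xg : En n → En n) (hgprox : IsMoreauR g μ Mg xg)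
    (x z : ℕ → En n)
    (hx : ∀ k : ℕ, ∀ w : En n,
      ((⟪f' (x k), x (k + 1)⟫ + ‖x (k + 1) - z k‖ ^ 2 / (2 * μ) : ℝ) : EReal) + h (x (k + 1)) ≤
        ((⟪f' (x k), w⟫ + ‖w - z k‖ ^ 2 / (2 * μ) : ℝ) : EReal) + h w)
    (hz : ∀ k : ℕ, z (k + 1) = z k + β • (x (k + 1) - xg (z k))) :
    ∀ k : ℕ,
      (Fstar : EReal) ≤ ((Mφ (z k) - Mg (z k) : ℝ) : EReal) ∧
      ((Mφ (z k) - Mg (z k) : ℝ) : EReal) ≤ potF f h Mg μ (x k) (z k) ∧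
      potF f h Mg μ (x (k + 1)) (z (k + 1)) +
          (((μ⁻¹ - Lf) / 2 * ‖x (k + 1) - x k‖ ^ 2 +
            (1 / β - 1 / 2) / μ * ‖z (k + 1) - z k‖ ^ 2 : ℝ) : EReal) ≤
        potF f h Mg μ (x k) (z k) := by
  intro k
  obtain ⟨-, -, hFstar⟩ := hmin
  exact ⟨le_moreau_sub_moreau hFstar hφprox hgprox (z k), moreau_sub_le_potF hφprox (x k) (z k),
    potF_add_le_of_step hfdiff hfLip hhconv hhproper.2 hg hμ0 hgprox (hx k) (hz k)⟩

/-- descent property of the potential `ℱ` along the inexact gradient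
descent iterates on `F_μ` (Algorithm 1). -/
theorem stmt15 {n : ℕ} (f : En n → ℝ) (f' : En n → En n) (Lf : ℝ) (hLf : 0 < Lf)
    (hfdiff : ∀ x, HasGradientAt f (f' x) x)
    (hfLip : ∀ x y : En n, ‖f' x - f' y‖ ≤ Lf * ‖x - y‖)
    (h : En n → EReal) (hhproper : ProperE h) (hhlsc : LowerSemicontinuous h)
    (hhconv : ConvexE h)
    (g : En n → ℝ) (hg : ConvexOn ℝ Set.univ g)
    (μ β : ℝ) (hμ0 : 0 < μ) (hμ1 : μ < 1 / Lf) (hβ0 : 0 < β) (hβ2 : β < 2)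
    (Fstar : ℝ)
    (hmin : ∃ xs : En n, ((f xs : ℝ) : EReal) + h xs - ((g xs : ℝ) : EReal) = (Fstar : EReal) ∧
      ∀ x, (Fstar : EReal) ≤ ((f x : ℝ) : EReal) + h x - ((g x : ℝ) : EReal))
    (Mφ : En n → ℝ) (xφ : En n → En n)
    (hφprox : IsMoreau (fun w => ((f w : ℝ) : EReal) + h w) μ Mφ xφ)
    (Mg : En n → ℝ) (xg : En n → En n) (hgprox : IsMoreauR g μ Mg xg)
    (x z : ℕ → En n)
    (hx : ∀ k : ℕ, ∀ w : En n,
      ((⟪f' (x k), x (k + 1)⟫ + ‖x (k + 1) - z k‖ ^ 2 / (2 * μ) : ℝ) : EReal) + h (x (k + 1)) ≤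
        ((⟪f' (x k), w⟫ + ‖w - z k‖ ^ 2 / (2 * μ) : ℝ) : EReal) + h w)
    (hz : ∀ k : ℕ, z (k + 1) = z k + β • (x (k + 1) - xg (z k))) :
    ∀ k : ℕ,
      (Fstar : EReal) ≤ ((Mφ (z k) - Mg (z k) : ℝ) : EReal) ∧
      ((Mφ (z k) - Mg (z k) : ℝ) : EReal) ≤ potF f h Mg μ (x k) (z k) ∧
      potF f h Mg μ (x (k + 1)) (z (k + 1)) +
          (((μ⁻¹ - Lf) / 2 * ‖x (k + 1) - x k‖ ^ 2 +
            (1 / β - 1 / 2) / μ * ‖z (k + 1) - z k‖ ^ 2 : ℝ) : EReal) ≤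
        potF f h Mg μ (x k) (z k) :=
  stmt15_general f f' Lf hfdiff hfLip h hhproper hhconv g hg μ β hμ0 Fstar hmin Mφ xφ hφprox Mg xg
    hgprox x z hx hz
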